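/- arXiv:2009.07385 — 5 statements merged into one kernel-verified Lean document; each statement's English description precedes it below -/
import Mathlib

section
/- For vectors x and y of strictly positive real numbers of length n, equality H(x + y) = H(x) + H(y) holds if and only if there exists a positive constant c > 0 such that x = c·y (componentwise, x_i = c·y_i for all i). -/
private lemma harmonic_aux (m B c : ℝ) (hB : 0 < B) (hc : 0 < c) :
    m / (B / (c + 1)) = m / (B / c) + m / B := by
  have hc1 : (0:ℝ) < c + 1 := by linarith
  field_simp


/-- Equality `H(x+y) = H(x) + H(y)` for the harmonic mean of strictly positive vectors
holds iff `x = c • y` for some `c > 0`. -/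
theorem harmonic_mean_superadditive_eq_iff (n : ℕ) (x y : Fin n → ℝ)
    (hx : ∀ i, 0 < x i) (hy : ∀ i, 0 < y i) :
    (n : ℝ) / ∑ i, 1 / (x i + y i) =
        (n : ℝ) / ∑ i, 1 / x i + (n : ℝ) / ∑ i, 1 / y i ↔
      ∃ c : ℝ, 0 < c ∧ x = c • y := by
  rcases Nat.eq_zero_or_pos n with hn | hn
  · subst hn
    constructor
    · intro _
      exact ⟨1, one_pos, funext fun i => i.elim0⟩
    · intro _
      simp
  · have hne : Nonempty (Fin n) := ⟨⟨0, hn⟩⟩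
    have hnpos : (0 : ℝ) < n := by exact_mod_cast hn
    have hBpos : 0 < ∑ i, 1 / y i :=
      Finset.sum_pos (fun i _ => by have := hy i; positivity) Finset.univ_nonempty
    constructor
    · intro h
      set A := ∑ i, 1 / x i with hAdef
      set B := ∑ i, 1 / y i with hBdef
      set S := ∑ i, 1 / (x i + y i) with hSdef
      have hApos : 0 < A :=
        Finset.sum_pos (fun i _ => by have := hx i; positivity) Finset.univ_nonempty
      have hSpos : 0 < S :=
        Finset.sum_pos (fun i _ => by have := hx i; have := hy i; positivity)
          Finset.univ_nonempty
      have hABpos : 0 < A + B := by linarith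
      have hSval : S * (A + B) = A * B := by
        field_simp at h
        nlinarith [h]
      set t := B / (A + B) with htdef
      have key : ∀ i, t ^ 2 / x i + (1 - t) ^ 2 / y i - 1 / (x i + y i)
          = (t * y i - (1 - t) * x i) ^ 2 / (x i * y i * (x i + y i)) := by
        intro i
        have hxi := hx i; have hyi := hy i
        have ht1 : 1 - t = A / (A + B) := by
          rw [htdef]; field_simp; ring
        rw [ht1, htdef]
        field_simp
        ring
      have hf : ∀ i ∈ Finset.univ, (0:ℝ) ≤ t ^ 2 / x i + (1 - t) ^ 2 / y i - 1 / (x i + y i) := by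
        intro i _
        rw [key i]
        have hxi := hx i; have hyi := hy i
        positivity
      have hsum : ∑ i, (t ^ 2 / x i + (1 - t) ^ 2 / y i - 1 / (x i + y i)) = 0 := by
        have e1 : ∑ i, (t ^ 2 / x i + (1 - t) ^ 2 / y i - 1 / (x i + y i))
            = t ^ 2 * A + (1 - t) ^ 2 * B - S := by
          rw [hAdef, hBdef, hSdef, Finset.mul_sum, Finset.mul_sum,
            ← Finset.sum_add_distrib, ← Finset.sum_sub_distrib]
          exact Finset.sum_congr rfl fun i _ => by ring
        rw [e1, htdef]
        have hABne : A + B ≠ 0 := ne_of_gt hABpos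
        field_simp
        nlinarith [hSval]
      have hz := (Finset.sum_eq_zero_iff_of_nonneg hf).mp hsum
      refine ⟨B / A, by positivity, funext fun i => ?_⟩
      have hzi := hz i (Finset.mem_univ i)
      rw [key i] at hzi
      have hxi := hx i; have hyi := hy i
      have hD : x i * y i * (x i + y i) ≠ 0 := by positivity
      have hsq : (t * y i - (1 - t) * x i) ^ 2 = 0 := by
        rcases div_eq_zero_iff.mp hzi with h' | h'
        · exact h'
        · exact absurd h' hD
      have heq : t * y i = (1 - t) * x i := by
        have := pow_eq_zero_iff (n := 2) (by norm_num) |>.mp hsq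
        linarith
      have ht1 : 1 - t = A / (A + B) := by rw [htdef]; field_simp; ring
      rw [htdef, ht1] at heq
      have hBA : B * y i = A * x i := by
        field_simp at heq
        linarith
      show x i = (B / A) * y i
      field_simp
      linarith
    · rintro ⟨c, hc, rfl⟩
      simp only [Pi.smul_apply, smul_eq_mul]
      have h1 : ∑ i, 1 / (c * y i + y i) = (∑ i, 1 / y i) / (c + 1) := by
        rw [Finset.sum_div]
        refine Finset.sum_congr rfl fun i _ => ?_
        have hyi := hy i
        rw [div_div]
        congr 1
        ring
      have h2 : ∑ i, 1 / (c * y i) = (∑ i, 1 / y i) / c := by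
        rw [Finset.sum_div]
        refine Finset.sum_congr rfl fun i _ => ?_
        have hyi := hy i
        rw [div_div]
        congr 1
        ring
      rw [h1, h2]
      exact harmonic_aux _ _ _ hBpos hc
end

section
/- Let x and y be vectors of strictly positive real numbers of length n with x_i > y_i for every i. Then equality H(x − y) = H(x) − H(y) holds if and only if there exists a constant c > 0 such that x = c·y componentwise (necessarily c > 1). -/
/-- For strictly positive vectors with `xᵢ > yᵢ`, equality `H(x−y) = H(x) − H(y)`
holds iff `x = c • y` for some constant `c > 0`. -/
theorem harmonic_mean_sub_eq_iff (n : ℕ) (x y : Fin n → ℝ)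
    (hy : ∀ i, 0 < y i) (hxy : ∀ i, y i < x i) :
    (n : ℝ) / ∑ i, 1 / (x i - y i) =
        (n : ℝ) / ∑ i, 1 / x i - (n : ℝ) / ∑ i, 1 / y i ↔
      ∃ c : ℝ, 0 < c ∧ x = c • y := by
  rcases Nat.eq_zero_or_pos n with hn | hn
  · subst hn
    constructor
    · intro _
      exact ⟨1, one_pos, funext fun i => i.elim0⟩
    · intro _
      simp
  · have hz : ∀ i, 0 < x i - y i := fun i => sub_pos.2 (hxy i)
    have hx : ∀ i, 0 < x i := fun i => (hy i).trans (hxy i)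
    have hne : Nonempty (Fin n) := ⟨⟨0, hn⟩⟩
    have hn' : (0 : ℝ) < n := Nat.cast_pos.2 hn
    set S := ∑ i, 1 / (x i - y i) with hS
    set U := ∑ i, 1 / x i with hU
    set T := ∑ i, 1 / y i with hT
    have hSpos : 0 < S :=
      Finset.sum_pos (fun i _ => one_div_pos.2 (hz i)) Finset.univ_nonempty
    have hUpos : 0 < U :=
      Finset.sum_pos (fun i _ => one_div_pos.2 (hx i)) Finset.univ_nonempty
    have hTpos : 0 < T :=
      Finset.sum_pos (fun i _ => one_div_pos.2 (hy i)) Finset.univ_nonempty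
    constructor
    · intro h
      have key : S * T = U * (S + T) := by
        field_simp at h
        nlinarith [hn', hSpos, hTpos, hUpos]
      -- sum of nonnegative terms equal to zero
      set g : Fin n → ℝ :=
        fun i => T ^ 2 / (x i - y i) + S ^ 2 / (y i) - (S + T) ^ 2 / (x i) with hg
      have hgform : ∀ i, g i =
          (T * y i - S * (x i - y i)) ^ 2 / ((x i - y i) * y i * x i) := by
        intro i
        have h1 := (hz i).ne'
        have h2 := (hy i).ne'
        have h3 := (hx i).ne'
        rw [hg]
        field_simp
        ring
      have hgnonneg : ∀ i ∈ Finset.univ, 0 ≤ g i := by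
        intro i _
        rw [hgform i]
        have := hz i; have := hy i; have := hx i
        positivity
      have hsum : ∑ i, g i = 0 := by
        have e1 : ∑ i, T ^ 2 / (x i - y i) = T ^ 2 * S := by
          rw [hS, Finset.mul_sum]
          exact Finset.sum_congr rfl fun i _ => by ring
        have e2 : ∑ i, S ^ 2 / (y i) = S ^ 2 * T := by
          rw [hT, Finset.mul_sum]
          exact Finset.sum_congr rfl fun i _ => by ring
        have e3 : ∑ i, (S + T) ^ 2 / (x i) = (S + T) ^ 2 * U := by
          rw [hU, Finset.mul_sum]
          exact Finset.sum_congr rfl fun i _ => by ring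
        have : ∑ i, g i = T ^ 2 * S + S ^ 2 * T - (S + T) ^ 2 * U := by
          simp only [hg, Finset.sum_sub_distrib, Finset.sum_add_distrib, e1, e2, e3]
        rw [this]
        linear_combination (S + T) * key
      have hzero : ∀ i ∈ Finset.univ, g i = 0 :=
        (Finset.sum_eq_zero_iff_of_nonneg hgnonneg).1 hsum
      refine ⟨(S + T) / S, by positivity, funext fun i => ?_⟩
      have h0 := hzero i (Finset.mem_univ i)
      rw [hgform i] at h0
      have hd : (x i - y i) * y i * x i ≠ 0 := by
        have := hz i; have := hy i; have := hx i; positivity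
      have hlin : T * y i - S * (x i - y i) = 0 := by
        field_simp at h0
        exact (pow_eq_zero_iff two_ne_zero).1 ((div_eq_zero_iff.1 h0).resolve_right (by have := hz i; have := hy i; have := hx i; positivity))
      show x i = ((S + T) / S) * y i
      field_simp
      linarith [hlin]
    · rintro ⟨c, hc, rfl⟩
      have hc1 : 1 < c := by
        have h0 := hxy ⟨0, hn⟩
        have hy0 := hy ⟨0, hn⟩
        have : 1 * y ⟨0, hn⟩ < c * y ⟨0, hn⟩ := by
          simpa using h0
        exact lt_of_mul_lt_mul_right this hy0.le
      have e1 : ∑ i, 1 / ((c • y) i - y i) = (c - 1)⁻¹ * T := by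
        rw [hT, Finset.mul_sum]
        refine Finset.sum_congr rfl fun i _ => ?_
        have h2 := (hy i).ne'
        have h3 : c - 1 ≠ 0 := by linarith
        have h5 : c * y i - y i ≠ 0 := by
          have := hz i
          simp only [Pi.smul_apply, smul_eq_mul] at this
          linarith
        simp only [Pi.smul_apply, smul_eq_mul]
        rw [one_div, one_div, ← mul_inv]
        congr 1
        ring
      have e2 : ∑ i, 1 / ((c • y) i) = c⁻¹ * T := by
        rw [hT, Finset.mul_sum]
        refine Finset.sum_congr rfl fun i _ => ?_
        have h2 := (hy i).ne'
        have h3 : c ≠ 0 := by linarith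
        simp only [Pi.smul_apply, smul_eq_mul]
        field_simp
      rw [hS, hU, e1, e2]
      have h3 : c - 1 ≠ 0 := by linarith
      have h4 : c ≠ 0 := by linarith
      field_simp
end

section
/- Let A and B be n × n Hermitian positive-definite complex matrices. Then 1 / trace((A + B)^{-1}) ≥ 1 / trace(A^{-1}) + 1 / trace(B^{-1}). -/
open scoped ComplexOrder
open Matrix

lemma conj_mul_self_re (z : ℂ) : ((starRingEnd ℂ) z * z).re = ‖z‖ ^ 2 := by
  rw [← Complex.normSq_eq_conj_mul_self, Complex.ofReal_re, ← Complex.sq_norm]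

lemma star_mul_self_re (z : ℂ) : (star z * z).re = ‖z‖ ^ 2 := conj_mul_self_re z

lemma posdef_diag_re_pos {k : ℕ} {M : Matrix (Fin k) (Fin k) ℂ} (hM : M.PosDef) (i : Fin k) :
    0 < (M i i).re := by
  have h := hM.re_dotProduct_pos (x := Pi.single i 1)
    (by intro h; have := congrFun h i; simp at this)
  simpa [Matrix.mulVec_single, dotProduct, Pi.single_apply, apply_ite,
    Finset.sum_ite_eq'] using h

lemma frob_cs {k : ℕ} (M N : Matrix (Fin k) (Fin k) ℂ) :
    ((Mᴴ * N).trace.re) ^ 2 ≤ (Mᴴ * M).trace.re * (Nᴴ * N).trace.re := by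
  classical
  let u : EuclideanSpace ℂ (Fin k × Fin k) := WithLp.toLp 2 (fun p : Fin k × Fin k => M p.1 p.2)
  let v : EuclideanSpace ℂ (Fin k × Fin k) := WithLp.toLp 2 (fun p : Fin k × Fin k => N p.1 p.2)
  have hinner : (Mᴴ * N).trace = inner ℂ u v := by
    rw [PiLp.inner_apply]
    simp only [RCLike.inner_apply']
    show ∑ j, (Mᴴ * N) j j = ∑ p : Fin k × Fin k, (starRingEnd ℂ) (M p.1 p.2) * N p.1 p.2
    rw [Fintype.sum_prod_type]
    simp only [Matrix.mul_apply, Matrix.conjTranspose_apply]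
    exact Finset.sum_comm
  have hM2 : (Mᴴ * M).trace.re = ‖u‖ ^ 2 := by
    rw [PiLp.norm_sq_eq_of_L2]
    show (∑ j, (Mᴴ * M) j j).re = ∑ p : Fin k × Fin k, ‖M p.1 p.2‖ ^ 2
    rw [Fintype.sum_prod_type, Complex.re_sum]
    simp only [Matrix.mul_apply, Matrix.conjTranspose_apply, Complex.re_sum, conj_mul_self_re, star_mul_self_re]
    exact Finset.sum_comm
  have hN2 : (Nᴴ * N).trace.re = ‖v‖ ^ 2 := by
    rw [PiLp.norm_sq_eq_of_L2]
    show (∑ j, (Nᴴ * N) j j).re = ∑ p : Fin k × Fin k, ‖N p.1 p.2‖ ^ 2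
    rw [Fintype.sum_prod_type, Complex.re_sum]
    simp only [Matrix.mul_apply, Matrix.conjTranspose_apply, Complex.re_sum, conj_mul_self_re, star_mul_self_re]
    exact Finset.sum_comm
  have h1 : ‖(Mᴴ * N).trace‖ ≤ ‖u‖ * ‖v‖ := hinner ▸ norm_inner_le_norm u v
  have h2 : ((Mᴴ * N).trace.re) ^ 2 ≤ ‖(Mᴴ * N).trace‖ ^ 2 := by
    have : ‖(Mᴴ * N).trace‖ ^ 2 = (Mᴴ * N).trace.re ^ 2 + (Mᴴ * N).trace.im ^ 2 := by
      rw [Complex.sq_norm, Complex.normSq_apply]; ring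
    nlinarith [sq_nonneg (Mᴴ * N).trace.im]
  calc ((Mᴴ * N).trace.re) ^ 2 ≤ ‖(Mᴴ * N).trace‖ ^ 2 := h2
    _ ≤ (‖u‖ * ‖v‖) ^ 2 := pow_le_pow_left₀ (norm_nonneg _) h1 2
    _ = ‖u‖ ^ 2 * ‖v‖ ^ 2 := by ring
    _ = (Mᴴ * M).trace.re * (Nᴴ * N).trace.re := by rw [hM2, hN2]
lemma posdef_trace_re_pos {k : ℕ} (hk : 0 < k) {M : Matrix (Fin k) (Fin k) ℂ}
    (hM : M.PosDef) : 0 < M.trace.re := by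
  have : M.trace.re = ∑ i, (M i i).re := by
    simp [Matrix.trace, Matrix.diag, Complex.re_sum]
  rw [this]
  exact Finset.sum_pos (fun i _ => posdef_diag_re_pos hM i)
    (by simpa [Finset.univ_nonempty_iff] using Fin.pos_iff_nonempty.mp hk)

/-- Key step: for PD `A` and Hermitian PD `C`, `(tr C)^2 ≤ tr(A⁻¹) * tr(C*A*C)`. -/
lemma key_step {k : ℕ} {A C : Matrix (Fin k) (Fin k) ℂ} (hA : A.PosDef) (hC : C.PosDef) :
    (C.trace.re) ^ 2 ≤ (A⁻¹).trace.re * (C * A * C).trace.re := by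
  classical
  set R := (open MatrixOrder in CFC.sqrt A) with hR
  have hRherm : Rᴴ = R := (open MatrixOrder in (CFC.sqrt_nonneg A).posSemidef.1)
  have hRR : R * R = A := (open MatrixOrder in CFC.sqrt_mul_sqrt_self A hA.posSemidef.nonneg)
  have hdetA : A.det ≠ 0 := hA.det_pos.ne'
  have hdetR : R.det ≠ 0 := by
    intro h
    apply hdetA
    rw [← hRR, Matrix.det_mul, h, mul_zero]
  have h1 : (R⁻¹)ᴴ * (R * C) = C := by
    rw [Matrix.conjTranspose_nonsing_inv, hRherm, ← Matrix.mul_assoc,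
      Matrix.nonsing_inv_mul R (isUnit_iff_ne_zero.mpr hdetR), Matrix.one_mul]
  have h2 : (R⁻¹)ᴴ * R⁻¹ = A⁻¹ := by
    rw [Matrix.conjTranspose_nonsing_inv, hRherm, ← Matrix.mul_inv_rev, hRR]
  have h3 : (R * C)ᴴ * (R * C) = C * A * C := by
    rw [Matrix.conjTranspose_mul, hRherm, hC.isHermitian.eq, Matrix.mul_assoc,
      ← Matrix.mul_assoc R R C, hRR, Matrix.mul_assoc]
  have h4 := frob_cs R⁻¹ (R * C)
  rwa [h1, h2, h3] at h4

/-- For Hermitian positive-definite complex matrices `A` and `B`,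
`1/trace((A+B)⁻¹) ≥ 1/trace(A⁻¹) + 1/trace(B⁻¹)`. -/
theorem one_div_trace_inv_add_superadditive (n : ℕ)
    (A B : Matrix (Fin n) (Fin n) ℂ) (hA : A.PosDef) (hB : B.PosDef) :
    1 / ((A + B)⁻¹).trace.re ≥ 1 / (A⁻¹).trace.re + 1 / (B⁻¹).trace.re := by
  classical
  rcases Nat.eq_zero_or_pos n with hn | hn
  · subst hn
    simp [Matrix.trace]
  set S := A + B with hS
  have hSpd : S.PosDef := hA.add hB
  set C := S⁻¹ with hC
  have hCpd : C.PosDef := hSpd.inv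
  have hdetS : S.det ≠ 0 := hSpd.det_pos.ne'
  have hCS : C * S = 1 := Matrix.nonsing_inv_mul S (isUnit_iff_ne_zero.mpr hdetS)
  have hsum : (C * A * C).trace.re + (C * B * C).trace.re = C.trace.re := by
    have h5 : C * A * C + C * B * C = C := by
      have h6 : C * A * C + C * B * C = C * S * C := by
        rw [hS]; noncomm_ring
      rw [h6, hCS, Matrix.one_mul]
    calc (C * A * C).trace.re + (C * B * C).trace.re
        = ((C * A * C) + (C * B * C)).trace.re := by rw [Matrix.trace_add, Complex.add_re]
      _ = C.trace.re := by rw [h5]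
  have ha : 0 < (A⁻¹).trace.re := posdef_trace_re_pos hn hA.inv
  have hb : 0 < (B⁻¹).trace.re := posdef_trace_re_pos hn hB.inv
  have ht : 0 < C.trace.re := posdef_trace_re_pos hn hCpd
  have hx := key_step hA hCpd
  have hy := key_step hB hCpd
  set a := (A⁻¹).trace.re
  set b := (B⁻¹).trace.re
  set t := C.trace.re
  set x := (C * A * C).trace.re
  set y := (C * B * C).trace.re
  have hx0 : 0 < x := by nlinarith
  have hy0 : 0 < y := by nlinarith
  rw [ge_iff_le, div_add_div _ _ ha.ne' hb.ne', div_le_div_iff₀ (by positivity) ht]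
  nlinarith [mul_pos ha hb, mul_pos ht ht, mul_pos hx0 hy0, sq_nonneg t,
    mul_le_mul_of_nonneg_left hx hb.le, mul_le_mul_of_nonneg_left hy ha.le]
end

section
/- Let A and B be commuting n × n Hermitian positive-definite complex matrices. Then equality 1 / trace((A + B)^{-1}) = 1 / trace(A^{-1}) + 1 / trace(B^{-1}) holds if and only if there exists a constant c > 0 such that A = c·B. -/
set_option maxHeartbeats 1000000

open scoped ComplexOrder
open Matrix

private lemma hermitian_trace_eq {n : ℕ} {C : Matrix (Fin n) (Fin n) ℂ}
    (hC : C.IsHermitian) : C.trace = (C.trace.re : ℂ) := by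
  have h0 := Matrix.trace_conjTranspose C
  rw [hC.eq] at h0
  have h : (starRingEnd ℂ) C.trace = C.trace := h0.symm
  exact (Complex.conj_eq_iff_re.mp h).symm

private lemma posdef_trace_re_pos_s9 {n : ℕ} (hn : 0 < n) {C : Matrix (Fin n) (Fin n) ℂ}
    (hC : C.PosDef) : 0 < C.trace.re := by
  haveI : Nonempty (Fin n) := ⟨⟨0, hn⟩⟩
  have hd : ∀ i, 0 < (C i i).re := fun i => by
    have hx : (Pi.single i 1 : Fin n → ℂ) ≠ 0 := by
      intro h; simpa using congrFun h i
    have h := hC.dotProduct_mulVec_pos hx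
    have he : star (Pi.single i 1 : Fin n → ℂ) ⬝ᵥ C.mulVec (Pi.single i 1) = C i i := by
      simp [dotProduct, Matrix.mulVec, Pi.single_apply, apply_ite, mul_ite, ite_mul,
        Finset.sum_ite_eq, Finset.sum_ite_eq']
    rw [he] at h
    simpa using (Complex.lt_def.mp h).1
  have h1 : C.trace.re = ∑ i, (C i i).re := by
    simp [Matrix.trace, Matrix.diag, Complex.re_sum]
  rw [h1]
  exact Finset.sum_pos (fun i _ => hd i) Finset.univ_nonempty

private lemma eq_zero_of_trace_ctm {n : ℕ} {Y : Matrix (Fin n) (Fin n) ℂ}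
    (h : (Yᴴ * Y).trace = 0) : Y = 0 := by
  have h3 : (Yᴴ * Y).trace.re = ∑ j, ∑ i, Complex.normSq (Y i j) := by
    simp only [Matrix.trace, Matrix.diag, Matrix.mul_apply, Matrix.conjTranspose_apply,
      Complex.re_sum]
    refine Finset.sum_congr rfl fun j _ => Finset.sum_congr rfl fun i _ => ?_
    rw [show (star (Y i j) * Y i j) = ((Complex.normSq (Y i j) : ℂ)) from
      (Complex.normSq_eq_conj_mul_self).symm ▸ rfl, Complex.ofReal_re]
  have h1 : ∑ j, ∑ i, Complex.normSq (Y i j) = 0 := by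
    rw [← h3, h, Complex.zero_re]
  ext i j
  have hnn : ∀ j' ∈ Finset.univ, (0:ℝ) ≤ ∑ i', Complex.normSq (Y i' j') :=
    fun _ _ => Finset.sum_nonneg fun _ _ => Complex.normSq_nonneg _
  have hj := (Finset.sum_eq_zero_iff_of_nonneg hnn).mp h1 j (Finset.mem_univ j)
  have hij := (Finset.sum_eq_zero_iff_of_nonneg
    (fun _ _ => Complex.normSq_nonneg _)).mp hj i (Finset.mem_univ i)
  simpa [Matrix.zero_apply] using Complex.normSq_eq_zero.mp hij

/-- For commuting Hermitian positive-definite complex matrices `A` and `B`, equality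
`1/trace((A+B)⁻¹) = 1/trace(A⁻¹) + 1/trace(B⁻¹)` holds iff `A = c • B` for some `c > 0`. -/
theorem one_div_trace_inv_add_eq_iff (n : ℕ)
    (A B : Matrix (Fin n) (Fin n) ℂ) (hA : A.PosDef) (hB : B.PosDef)
    (hcomm : A * B = B * A) :
    1 / ((A + B)⁻¹).trace.re = 1 / (A⁻¹).trace.re + 1 / (B⁻¹).trace.re ↔
      ∃ c : ℝ, 0 < c ∧ A = (c : ℂ) • B := by
  rcases Nat.eq_zero_or_pos n with hn | hn
  · subst hn
    constructor
    · intro _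
      exact ⟨1, one_pos, by ext i j; exact i.elim0⟩
    · intro _
      have hz : ∀ M : Matrix (Fin 0) (Fin 0) ℂ, M.trace = 0 := fun M => by
        simp [Matrix.trace]
      rw [hz, hz, hz]
      norm_num
  -- main case
  have hC : (A + B).PosDef := hA.add hB
  have hAd : IsUnit A.det := hA.det_pos.ne'.isUnit
  have hBd : IsUnit B.det := hB.det_pos.ne'.isUnit
  have hCd : IsUnit (A + B).det := hC.det_pos.ne'.isUnit
  have hAA : A * A⁻¹ = 1 := Matrix.mul_nonsing_inv _ hAd
  have hAA' : A⁻¹ * A = 1 := Matrix.nonsing_inv_mul _ hAd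
  have hBB : B * B⁻¹ = 1 := Matrix.mul_nonsing_inv _ hBd
  have hBB' : B⁻¹ * B = 1 := Matrix.nonsing_inv_mul _ hBd
  have hCC : (A + B) * (A + B)⁻¹ = 1 := Matrix.mul_nonsing_inv _ hCd
  have hCC' : (A + B)⁻¹ * (A + B) = 1 := Matrix.nonsing_inv_mul _ hCd
  set s := (A⁻¹).trace.re with hs_def
  set t := (B⁻¹).trace.re with ht_def
  set u := ((A + B)⁻¹).trace.re with hu_def
  have tsA : (A⁻¹).trace = (s:ℂ) := hermitian_trace_eq hA.inv.1
  have tsB : (B⁻¹).trace = (t:ℂ) := hermitian_trace_eq hB.inv.1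
  have tsC : ((A + B)⁻¹).trace = (u:ℂ) := hermitian_trace_eq hC.inv.1
  have hs : 0 < s := posdef_trace_re_pos_s9 hn hA.inv
  have ht : 0 < t := posdef_trace_re_pos_s9 hn hB.inv
  have hu : 0 < u := posdef_trace_re_pos_s9 hn hC.inv
  constructor
  · intro heq
    -- scalar consequence
    have hst : s * t = (s + t) * u := by
      field_simp at heq
      linarith
    -- invertibility and commutation
    letI iA : Invertible A := A.invertibleOfIsUnitDet hAd
    letI iB : Invertible B := B.invertibleOfIsUnitDet hBd
    letI iC : Invertible (A + B) := (A + B).invertibleOfIsUnitDet hCd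
    have hAB : Commute A B := hcomm
    have hACo : Commute A (A + B) := (Commute.refl A).add_right hAB
    have hBCo : Commute B (A + B) := hAB.symm.add_right (Commute.refl B)
    have c2 : (A + B)⁻¹ * A = A * (A + B)⁻¹ := by
      rw [← Matrix.invOf_eq_nonsing_inv]
      exact (hACo.invOf_right).symm
    have c4 : A⁻¹ * B = B * A⁻¹ := by
      rw [← Matrix.invOf_eq_nonsing_inv]
      exact (hAB.symm.invOf_right).symm
    have cAiCi : A⁻¹ * (A + B)⁻¹ = (A + B)⁻¹ * A⁻¹ := by
      rw [← Matrix.invOf_eq_nonsing_inv (A := A), ← Matrix.invOf_eq_nonsing_inv (A := A + B)]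
      exact (hACo.invOf_right).invOf_left
    have cCiBi : (A + B)⁻¹ * B⁻¹ = B⁻¹ * (A + B)⁻¹ := by
      rw [← Matrix.invOf_eq_nonsing_inv (A := B), ← Matrix.invOf_eq_nonsing_inv (A := A + B)]
      exact ((hBCo.invOf_right).invOf_left).symm
    -- key identities
    have hCA : (A + B)⁻¹ * A * B⁻¹ = B⁻¹ - (A + B)⁻¹ := by
      have h' : (A + B)⁻¹ * ((A + B) - B) * B⁻¹ = B⁻¹ - (A + B)⁻¹ := by
        rw [mul_sub, sub_mul, hCC', Matrix.one_mul, Matrix.mul_assoc, hBB, Matrix.mul_one]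
      simpa using h'
    have E1 : B⁻¹ * (B * (A + B)⁻¹ * A) * B⁻¹ = B⁻¹ - (A + B)⁻¹ := by
      simp only [← Matrix.mul_assoc]
      rw [hBB', Matrix.one_mul]
      exact hCA
    have E2 : A⁻¹ * (B * (A + B)⁻¹ * A) * A⁻¹ = A⁻¹ - (A + B)⁻¹ := by
      simp only [← Matrix.mul_assoc]
      rw [Matrix.mul_assoc (A⁻¹ * B * (A + B)⁻¹), hAA, Matrix.mul_one]
      have h' : A⁻¹ * ((A + B) - A) * (A + B)⁻¹ = A⁻¹ - (A + B)⁻¹ := by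
        rw [mul_sub, sub_mul, hAA', Matrix.one_mul, Matrix.mul_assoc, hCC, Matrix.mul_one]
      simpa using h'
    have E3 : B⁻¹ * (B * (A + B)⁻¹ * A) * A⁻¹ = (A + B)⁻¹ := by
      simp only [← Matrix.mul_assoc]
      rw [hBB', Matrix.one_mul, Matrix.mul_assoc, hAA, Matrix.mul_one]
    have eAiW : A⁻¹ * (B * (A + B)⁻¹ * A) = B * (A + B)⁻¹ := by
      simp only [← Matrix.mul_assoc]
      rw [c4, Matrix.mul_assoc B, cAiCi, ← Matrix.mul_assoc, Matrix.mul_assoc (B * (A + B)⁻¹),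
        hAA', Matrix.mul_one]
    have E4 : A⁻¹ * (B * (A + B)⁻¹ * A) * B⁻¹ = (A + B)⁻¹ := by
      rw [eAiW, Matrix.mul_assoc, cCiBi, ← Matrix.mul_assoc, hBB, Matrix.one_mul]
    have E5 : (A⁻¹ + B⁻¹) * (B * (A + B)⁻¹ * A) = 1 := by
      rw [add_mul, eAiW]
      have eBiW : B⁻¹ * (B * (A + B)⁻¹ * A) = (A + B)⁻¹ * A := by
        simp only [← Matrix.mul_assoc]
        rw [hBB', Matrix.one_mul]
      rw [eBiW, c2, ← add_mul, add_comm B A, hCC]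
    -- W is positive definite
    have hWinv : (A⁻¹ + B⁻¹)⁻¹ = B * (A + B)⁻¹ * A := Matrix.inv_eq_right_inv E5
    have hWpd : (B * (A + B)⁻¹ * A).PosDef := by
      rw [← hWinv]; exact (hA.inv.add hB.inv).inv
    -- trace of M W M
    set M : Matrix (Fin n) (Fin n) ℂ := (s:ℂ) • B⁻¹ - (t:ℂ) • A⁻¹ with hM_def
    have hexp : M * (B * (A + B)⁻¹ * A) * M
        = ((s:ℂ) * (s:ℂ)) • (B⁻¹ * (B * (A + B)⁻¹ * A) * B⁻¹)
          - ((s:ℂ) * (t:ℂ)) • (B⁻¹ * (B * (A + B)⁻¹ * A) * A⁻¹)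
          - ((t:ℂ) * (s:ℂ)) • (A⁻¹ * (B * (A + B)⁻¹ * A) * B⁻¹)
          + ((t:ℂ) * (t:ℂ)) • (A⁻¹ * (B * (A + B)⁻¹ * A) * A⁻¹) := by
      rw [hM_def]
      simp only [sub_mul, mul_sub, smul_mul_assoc, mul_smul_comm, smul_smul]
      module
    have htr : (M * (B * (A + B)⁻¹ * A) * M).trace = 0 := by
      rw [hexp, E1, E2, E3, E4]
      simp only [Matrix.trace_add, Matrix.trace_sub, Matrix.trace_smul, tsA, tsB, tsC,
        smul_eq_mul]
      have hstC : (s:ℂ) * (t:ℂ) = ((s:ℂ) + (t:ℂ)) * (u:ℂ) := by exact_mod_cast hst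
      linear_combination ((s:ℂ) + (t:ℂ)) * hstC
    -- M is Hermitian
    have hMH : Mᴴ = M := by
      rw [hM_def]
      simp [Matrix.conjTranspose_sub, Matrix.conjTranspose_smul, hA.inv.1.eq, hB.inv.1.eq,
        Complex.star_def, Complex.conj_ofReal]
    -- square root
    open scoped MatrixOrder in
    have hR : CFC.sqrt (B * (A + B)⁻¹ * A) * CFC.sqrt (B * (A + B)⁻¹ * A) = B * (A + B)⁻¹ * A :=
      CFC.sqrt_mul_sqrt_self _ hWpd.posSemidef.nonneg
    open scoped MatrixOrder in
    have hRH : (CFC.sqrt (B * (A + B)⁻¹ * A))ᴴ = CFC.sqrt (B * (A + B)⁻¹ * A) :=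
      (CFC.sqrt_nonneg _).posSemidef.1
    open scoped MatrixOrder in
    set R := CFC.sqrt (B * (A + B)⁻¹ * A) with hR_def
    have hMWM : M * (B * (A + B)⁻¹ * A) * M = (R * M)ᴴ * (R * M) := by
      rw [Matrix.conjTranspose_mul, hRH, hMH, ← hR]
      simp only [Matrix.mul_assoc]
    rw [hMWM] at htr
    have hRM : R * M = 0 := eq_zero_of_trace_ctm htr
    have hWM : (B * (A + B)⁻¹ * A) * M = 0 := by
      rw [← hR, Matrix.mul_assoc, hRM, Matrix.mul_zero]
    have hWd : IsUnit (B * (A + B)⁻¹ * A).det := hWpd.det_pos.ne'.isUnit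
    have hM0 : M = 0 := by
      have := congrArg (fun X => (B * (A + B)⁻¹ * A)⁻¹ * X) hWM
      simpa [← Matrix.mul_assoc, Matrix.nonsing_inv_mul _ hWd] using this
    have hMeq : (s:ℂ) • B⁻¹ = (t:ℂ) • A⁻¹ := sub_eq_zero.mp (hM_def ▸ hM0)
    have h5 : (s:ℂ) • A = (t:ℂ) • B := by
      have h6 := congrArg (fun X => A * X * B) hMeq
      simp only [mul_smul_comm, smul_mul_assoc] at h6
      rw [Matrix.mul_assoc A B⁻¹ B, hBB', Matrix.mul_one, hAA, Matrix.one_mul] at h6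
      exact h6
    have hsne : (s:ℂ) ≠ 0 := by
      simpa using Complex.ofReal_ne_zero.mpr hs.ne'
    refine ⟨t / s, div_pos ht hs, ?_⟩
    have h7 : A = ((s:ℂ)⁻¹ * (t:ℂ)) • B := by
      rw [← smul_smul, ← h5, smul_smul, inv_mul_cancel₀ hsne, one_smul]
    rw [h7]
    congr 1
    push_cast
    ring
  · rintro ⟨c, hc, rfl⟩
    have hcne : (c:ℂ) ≠ 0 := Complex.ofReal_ne_zero.mpr hc.ne'
    have hc1ne : (c:ℂ) + 1 ≠ 0 := by
      have : ((c + 1 : ℝ) : ℂ) ≠ 0 := Complex.ofReal_ne_zero.mpr (by linarith)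
      simpa using this
    have hinvA : ((c:ℂ) • B)⁻¹ = (c:ℂ)⁻¹ • B⁻¹ := by
      apply Matrix.inv_eq_left_inv
      rw [Matrix.smul_mul, Matrix.mul_smul, smul_smul, inv_mul_cancel₀ hcne, one_smul, hBB']
    have hsum : (c:ℂ) • B + B = ((c:ℂ) + 1) • B := by rw [add_smul, one_smul]
    have hinvC : ((c:ℂ) • B + B)⁻¹ = ((c:ℂ) + 1)⁻¹ • B⁻¹ := by
      rw [hsum]
      apply Matrix.inv_eq_left_inv
      rw [Matrix.smul_mul, Matrix.mul_smul, smul_smul, inv_mul_cancel₀ hc1ne, one_smul, hBB']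
    rw [hu_def, hs_def, hinvA, hinvC, Matrix.trace_smul, Matrix.trace_smul, tsB]
    have e1 : ((c:ℂ)⁻¹ • (t:ℂ)).re = c⁻¹ * t := by
      rw [smul_eq_mul, show (c:ℂ)⁻¹ = ((c⁻¹ : ℝ) : ℂ) by push_cast; ring,
        ← Complex.ofReal_mul, Complex.ofReal_re]
    have e2 : (((c:ℂ) + 1)⁻¹ • (t:ℂ)).re = (c + 1)⁻¹ * t := by
      rw [smul_eq_mul, show ((c:ℂ) + 1)⁻¹ = (((c + 1)⁻¹ : ℝ) : ℂ) by push_cast; ring,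
        ← Complex.ofReal_mul, Complex.ofReal_re]
    rw [e1, e2]
    have hct : c + 1 ≠ 0 := by linarith
    field_simp
end

section
/- Let A and B be commuting n × n Hermitian positive-definite complex matrices such that A − B is positive definite. Then 1 / trace((A − B)^{-1}) ≤ 1 / trace(A^{-1}) − 1 / trace(B^{-1}), with equality if and only if A = c·B for some constant c > 0. -/
open scoped ComplexOrder
open Matrix

variable {m : Type*} [Fintype m] [DecidableEq m]

section helperdecls
variable {m : Type*} [Fintype m] [DecidableEq m]

private lemma star_single_one (i : m) :
    star (Pi.single i (1:ℂ)) = (Pi.single i 1 : m → ℂ) := by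
  ext j
  by_cases h : j = i <;> simp [Pi.single_apply, h]

private lemma single_one_ne_zero (i : m) : (Pi.single i 1 : m → ℂ) ≠ 0 := fun h =>
  one_ne_zero (α := ℂ) (by simpa using congrFun h i)

private lemma diag_dot (M : Matrix m m ℂ) (i : m) :
    star (Pi.single i (1:ℂ)) ⬝ᵥ (M *ᵥ Pi.single i 1) = M i i := by
  rw [star_single_one, single_dotProduct, mulVec_single]
  simp

private lemma trace_re_pos [Nonempty m] {M : Matrix m m ℂ} (hM : M.PosDef) :
    0 < M.trace.re := by
  have h : ∀ i : m, 0 < (M i i).re := fun i => by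
    have := hM.re_dotProduct_pos (x := Pi.single i (1:ℂ))
      (single_one_ne_zero i)
    rwa [diag_dot] at this
  have ht : M.trace.re = ∑ i, (M i i).re := by
    simp [Matrix.trace, Matrix.diag, Complex.re_sum]
  rw [ht]
  exact Finset.sum_pos (fun i _ => h i) Finset.univ_nonempty

private lemma trace_re_nonneg {M : Matrix m m ℂ} (hM : M.PosSemidef) :
    0 ≤ M.trace.re := by
  have h : ∀ i : m, 0 ≤ (M i i).re := fun i => by
    have := hM.re_dotProduct_nonneg (Pi.single i (1:ℂ))
    rwa [diag_dot] at this
  have ht : M.trace.re = ∑ i, (M i i).re := by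
    simp [Matrix.trace, Matrix.diag, Complex.re_sum]
  rw [ht]
  exact Finset.sum_nonneg fun i _ => h i

private lemma eq_zero_of_trace_re_eq_zero {M : Matrix m m ℂ} (hM : M.PosSemidef)
    (h : M.trace.re = 0) : M = 0 := by
  have hsum : M.trace.re = ∑ i, (M i i).re := by
    simp [Matrix.trace, Matrix.diag, Complex.re_sum]
  have hnn : ∀ i : m, 0 ≤ (M i i).re := fun i => by
    have := hM.re_dotProduct_nonneg (Pi.single i (1:ℂ))
    rwa [diag_dot] at this
  have hzero : ∀ i ∈ Finset.univ, ((M i i).re : ℝ) = 0 := by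
    rw [hsum] at h
    exact (Finset.sum_eq_zero_iff_of_nonneg fun i _ => hnn i).mp h
  have hcol : ∀ i : m, M *ᵥ Pi.single i 1 = 0 := by
    intro i
    rw [← hM.dotProduct_mulVec_zero_iff, diag_dot]
    have h0 : (0:ℂ) ≤ M i i := by
      have := hM.dotProduct_mulVec_nonneg (Pi.single i (1:ℂ))
      rwa [diag_dot] at this
    have him : (M i i).im = 0 := by
      rw [Complex.le_def] at h0
      exact h0.2.symm
    exact Complex.ext (hzero i (Finset.mem_univ i)) him
  ext i j
  have := congrFun (hcol j) i
  simpa [mulVec_single] using this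

private lemma posDef_mul_of_commute {P Q : Matrix m m ℂ} (hP : P.PosDef) (hQ : Q.PosDef)
    (h : P * Q = Q * P) : (P * Q).PosDef := by
  have herm : (P * Q).IsHermitian := by
    have h2 : (P * Q)ᴴ = Qᴴ * Pᴴ := conjTranspose_mul _ _
    rw [Matrix.IsHermitian, h2, hP.isHermitian, hQ.isHermitian, ← h]
  have psd : (P * Q).PosSemidef := by
    refine herm.posSemidef_iff_eigenvalues_nonneg.mpr ?_
    intro i
    set v : m → ℂ := ⇑(herm.eigenvectorBasis i) with hv
    have hvne : v ≠ 0 := by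
      intro hc
      refine (herm.eigenvectorBasis).orthonormal.ne_zero i ?_
      ext j
      exact congrFun hc j
    have hev : (P * Q) *ᵥ v = (herm.eigenvalues i : ℂ) • v := by
      have h3 := herm.mulVec_eigenvectorBasis i
      rw [← hv] at h3
      rw [h3]
      ext j
      simp [Complex.real_smul]
    have key : star v ⬝ᵥ ((Q * (P * Q)) *ᵥ v) =
        (herm.eigenvalues i : ℂ) * (star v ⬝ᵥ (Q *ᵥ v)) := by
      rw [← mulVec_mulVec, hev, mulVec_smul, dotProduct_smul, smul_eq_mul]
    have hpsd2 : (Q * (P * Q)).PosSemidef := by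
      have h4 : Q * (P * Q) = Qᴴ * P * Q := by rw [hQ.isHermitian, mul_assoc]
      rw [h4]
      exact hP.posSemidef.conjTranspose_mul_mul_same Q
    have h2 : 0 ≤ ((herm.eigenvalues i : ℂ) * (star v ⬝ᵥ (Q *ᵥ v))).re := by
      rw [← key]; exact hpsd2.re_dotProduct_nonneg v
    have h3 : 0 < (star v ⬝ᵥ (Q *ᵥ v)).re := hQ.re_dotProduct_pos hvne
    rw [Complex.re_ofReal_mul] at h2
    exact (mul_nonneg_iff_of_pos_right h3).mp (by linarith)
  have hunit : IsUnit (P * Q) := hP.isUnit.mul hQ.isUnit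
  have hinj : ∀ x : m → ℂ, (P * Q) *ᵥ x = 0 → x = 0 := by
    intro x hx
    have hdet : IsUnit (P * Q).det := (isUnit_iff_isUnit_det _).mp hunit
    have h5 : ((P * Q)⁻¹ * (P * Q)) *ᵥ x = 0 := by
      rw [← mulVec_mulVec, hx, mulVec_zero]
    rwa [Matrix.nonsing_inv_mul _ hdet, one_mulVec] at h5
  refine Matrix.PosDef.of_dotProduct_mulVec_pos psd.1 fun x hx => lt_of_le_of_ne (psd.dotProduct_mulVec_nonneg x) ?_
  intro h0
  exact hx (hinj x ((psd.dotProduct_mulVec_zero_iff x).mp h0.symm))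

private lemma inv_mul_comm {X Y : Matrix m m ℂ} (hX : IsUnit X.det) (h : X * Y = Y * X) :
    X⁻¹ * Y = Y * X⁻¹ := by
  calc X⁻¹ * Y = X⁻¹ * Y * (X * X⁻¹) := by rw [Matrix.mul_nonsing_inv _ hX, mul_one]
    _ = X⁻¹ * (Y * X) * X⁻¹ := by simp only [mul_assoc]
    _ = X⁻¹ * (X * Y) * X⁻¹ := by rw [h]
    _ = (X⁻¹ * X) * Y * X⁻¹ := by simp only [mul_assoc]
    _ = Y * X⁻¹ := by rw [Matrix.nonsing_inv_mul _ hX, one_mul]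

end helperdecls

/-- For commuting Hermitian positive-definite complex matrices `A`, `B` with `A − B`
positive definite, `1/trace((A−B)⁻¹) ≤ 1/trace(A⁻¹) − 1/trace(B⁻¹)`, with equality iff
`A = c • B` for some `c > 0`. -/
theorem one_div_trace_inv_sub_le (n : ℕ)
    (A B : Matrix (Fin n) (Fin n) ℂ) (hA : A.PosDef) (hB : B.PosDef)
    (hcomm : A * B = B * A) (hAB : (A - B).PosDef) :
    1 / ((A - B)⁻¹).trace.re ≤ 1 / (A⁻¹).trace.re - 1 / (B⁻¹).trace.re ∧
      (1 / ((A - B)⁻¹).trace.re = 1 / (A⁻¹).trace.re - 1 / (B⁻¹).trace.re ↔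
        ∃ c : ℝ, 0 < c ∧ A = (c : ℂ) • B) := by
  rcases Nat.eq_zero_or_pos n with hn | hn
  · subst hn
    have h0 : ∀ M : Matrix (Fin 0) (Fin 0) ℂ, M.trace = 0 := fun M =>
      Matrix.trace_eq_zero_of_isEmpty M
    refine ⟨by simp [h0], ?_, fun _ => by simp [h0]⟩
    intro _
    exact ⟨1, one_pos, by ext i j; exact i.elim0⟩
  haveI : Nonempty (Fin n) := ⟨⟨0, hn⟩⟩
  set C := A - B with hC
  have hdA : IsUnit A.det := isUnit_iff_ne_zero.mpr (ne_of_gt hA.det_pos)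
  have hdB : IsUnit B.det := isUnit_iff_ne_zero.mpr (ne_of_gt hB.det_pos)
  have hdC : IsUnit C.det := isUnit_iff_ne_zero.mpr (ne_of_gt hAB.det_pos)
  have hAi : A⁻¹.PosDef := hA.inv
  have hBi : B⁻¹.PosDef := hB.inv
  have hCi : C⁻¹.PosDef := hAB.inv
  set α := (A⁻¹).trace.re with hαd
  set β := (B⁻¹).trace.re with hβd
  set γ := (C⁻¹).trace.re with hγd
  have hα : 0 < α := trace_re_pos hAi
  have hβ : 0 < β := trace_re_pos hBi
  have hγ : 0 < γ := trace_re_pos hCi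
  have hβγ : 0 < β + γ := by linarith
  set t : ℝ := β / (β + γ) with htdef
  set s : ℝ := 1 - t with hsdef
  have hts : s = γ / (β + γ) := by rw [hsdef, htdef]; field_simp; ring
  have hspos : 0 < s := by rw [hts]; positivity
  have hsC : (s:ℂ) = 1 - (t:ℂ) := by rw [hsdef]; push_cast; ring
  -- commutation facts
  have hAC : A * C = C * A := by rw [hC, Matrix.mul_sub, Matrix.sub_mul, hcomm]
  have hBC : B * C = C * B := by rw [hC, Matrix.mul_sub, Matrix.sub_mul, hcomm]
  have c1 : A⁻¹ * B = B * A⁻¹ := inv_mul_comm hdA hcomm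
  have c2 : A⁻¹ * C = C * A⁻¹ := inv_mul_comm hdA hAC
  have c3 : B⁻¹ * C = C * B⁻¹ := inv_mul_comm hdB hBC
  have c4 : B⁻¹ * A = A * B⁻¹ := inv_mul_comm hdB hcomm.symm
  have c5 : C⁻¹ * A = A * C⁻¹ := inv_mul_comm hdC hAC.symm
  have c6 : C⁻¹ * B = B * C⁻¹ := inv_mul_comm hdC hBC.symm
  have c7 : A⁻¹ * B⁻¹ = B⁻¹ * A⁻¹ := inv_mul_comm hdA c4.symm
  have c8 : A⁻¹ * C⁻¹ = C⁻¹ * A⁻¹ := inv_mul_comm hdA c5.symm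
  have c9 : B⁻¹ * C⁻¹ = C⁻¹ * B⁻¹ := inv_mul_comm hdB c6.symm
  have hAAi : A * A⁻¹ = 1 := Matrix.mul_nonsing_inv _ hdA
  have hAiA : A⁻¹ * A = 1 := Matrix.nonsing_inv_mul _ hdA
  have hBBi : B * B⁻¹ = 1 := Matrix.mul_nonsing_inv _ hdB
  have hBiB : B⁻¹ * B = 1 := Matrix.nonsing_inv_mul _ hdB
  have hCCi : C * C⁻¹ = 1 := Matrix.mul_nonsing_inv _ hdC
  have hCiC : C⁻¹ * C = 1 := Matrix.nonsing_inv_mul _ hdC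
  set M := B⁻¹ * C⁻¹ * A⁻¹ with hM
  have hMcomm : (B⁻¹ * C⁻¹) * A⁻¹ = A⁻¹ * (B⁻¹ * C⁻¹) := by
    rw [mul_assoc, ← c8, ← mul_assoc, ← c7, mul_assoc]
  have hMpd : M.PosDef := by
    rw [hM]
    exact posDef_mul_of_commute (posDef_mul_of_commute hBi hCi c9) hAi hMcomm
  set X := (t:ℂ) • B - (s:ℂ) • C with hX
  have hXherm : Xᴴ = X := by
    rw [hX, conjTranspose_sub, conjTranspose_smul, conjTranspose_smul,
      hB.isHermitian, hAB.isHermitian]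
    simp [Complex.star_def, Complex.conj_ofReal]
  -- algebraic identities
  have e1 : B * M = C⁻¹ * A⁻¹ := by
    rw [hM, ← mul_assoc, ← mul_assoc, hBBi, one_mul]
  have e2 : C * M = B⁻¹ * A⁻¹ := by
    rw [hM, ← mul_assoc, ← mul_assoc, ← c3, mul_assoc B⁻¹ C C⁻¹, hCCi, mul_one]
  have hBeq : B = A - C := by rw [hC, sub_sub_cancel]
  have e3a : (C⁻¹ * A⁻¹) * A = C⁻¹ := by rw [mul_assoc, hAiA, mul_one]
  have e3b : (C⁻¹ * A⁻¹) * C = A⁻¹ := by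
    rw [mul_assoc, c2, ← mul_assoc, hCiC, one_mul]
  have e3 : (C⁻¹ * A⁻¹) * B = C⁻¹ - A⁻¹ := by
    rw [hBeq, Matrix.mul_sub, e3a, e3b]
  have e5a : (B⁻¹ * A⁻¹) * A = B⁻¹ := by rw [mul_assoc, hAiA, mul_one]
  have e5 : (B⁻¹ * A⁻¹) * B = A⁻¹ := by
    rw [mul_assoc, c1, ← mul_assoc, hBiB, one_mul]
  have e6 : (B⁻¹ * A⁻¹) * C = B⁻¹ - A⁻¹ := by
    rw [hC, Matrix.mul_sub, e5a, e5]
  have hXM : X * M = (t:ℂ) • (C⁻¹ * A⁻¹) - (s:ℂ) • (B⁻¹ * A⁻¹) := by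
    rw [hX, Matrix.sub_mul, smul_mul_assoc, smul_mul_assoc, e1, e2]
  have hid : Xᴴ * M * X = ((t:ℂ)^2) • C⁻¹ + ((s:ℂ)^2) • B⁻¹ - A⁻¹ := by
    rw [hXherm, hXM, hX]
    simp only [Matrix.sub_mul, Matrix.mul_sub, smul_mul_assoc, mul_smul_comm,
      e3, e3b, e5, e6, smul_sub, smul_smul]
    rw [hsC]
    module
  have hpsdT : (Xᴴ * M * X).PosSemidef := hMpd.posSemidef.conjTranspose_mul_mul_same X
  have htrT : (Xᴴ * M * X).trace.re = t^2 * γ + s^2 * β - α := by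
    rw [hid, Matrix.trace_sub, Matrix.trace_add, Matrix.trace_smul, Matrix.trace_smul]
    simp only [Complex.sub_re, Complex.add_re, smul_eq_mul, ← Complex.ofReal_pow,
      Complex.re_ofReal_mul]; rfl
  have hsum : t^2 * γ + s^2 * β = β * γ / (β + γ) := by
    rw [htdef, hts]; field_simp
  have htrnn : 0 ≤ t^2 * γ + s^2 * β - α := htrT ▸ trace_re_nonneg hpsdT
  have hkey : α ≤ β * γ / (β + γ) := by rw [← hsum]; linarith
  have hmain : 1 / γ ≤ 1 / α - 1 / β := by
    rw [le_sub_iff_add_le]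
    have h2 : 1 / (β * γ / (β + γ)) ≤ 1 / α := one_div_le_one_div_of_le hα hkey
    have h3 : 1 / (β * γ / (β + γ)) = 1 / γ + 1 / β := by
      field_simp
    linarith
  refine ⟨hmain, ?_, ?_⟩
  · -- equality implies A = c • B
    intro heq
    have hαval : α = β * γ / (β + γ) := by
      have h1 : 1 / α = 1 / γ + 1 / β := by linarith
      field_simp at h1 ⊢
      linarith
    have htr0 : (Xᴴ * M * X).trace.re = 0 := by
      rw [htrT, hsum, hαval]; ring
    have hT0 : Xᴴ * M * X = 0 := eq_zero_of_trace_re_eq_zero hpsdT htr0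
    have hXv : ∀ v : Fin n → ℂ, X *ᵥ v = 0 := by
      intro v
      by_contra hv
      have h1 : star (X *ᵥ v) ⬝ᵥ (M *ᵥ (X *ᵥ v)) = 0 := by
        rw [star_mulVec, ← dotProduct_mulVec, mulVec_mulVec, mulVec_mulVec, hT0]
        simp
      have h2 := hMpd.re_dotProduct_pos hv
      rw [h1] at h2
      simp at h2
    have hX0 : X = 0 := by
      ext i j
      have := congrFun (hXv (Pi.single j 1)) i
      simpa [mulVec_single] using this
    refine ⟨s⁻¹, inv_pos.mpr hspos, ?_⟩
    have h6 : (t:ℂ) • B = (s:ℂ) • C := by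
      apply sub_eq_zero.mp
      rw [← hX, hX0]
    have h5 : (s:ℂ) • A = B := by
      have h7 : (s:ℂ) • A = (s:ℂ) • C + (s:ℂ) • B := by
        rw [← smul_add, hC, sub_add_cancel]
      have h8 : (t:ℂ) + (s:ℂ) = 1 := by rw [hsdef]; push_cast; ring
      rw [h7, ← h6, ← add_smul, h8, one_smul]
    rw [← h5, smul_smul]
    have h9 : ((s⁻¹:ℝ):ℂ) * (s:ℂ) = 1 := by
      rw [← Complex.ofReal_mul, inv_mul_cancel₀ hspos.ne', Complex.ofReal_one]
    rw [h9, one_smul]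
  · -- A = c • B implies equality
    rintro ⟨c, hc, hAc⟩
    have hCval : C = ((c - 1 : ℝ):ℂ) • B := by
      rw [hC, hAc]; push_cast; rw [sub_smul, one_smul]
    have hxne : (Pi.single (⟨0, hn⟩ : Fin n) 1 : Fin n → ℂ) ≠ 0 := single_one_ne_zero _
    have hc1 : 0 < c - 1 := by
      have h8 := hAB.re_dotProduct_pos hxne
      rw [hCval, smul_mulVec, dotProduct_smul, smul_eq_mul] at h8
      simp only [RCLike.re_to_complex] at h8
      rw [Complex.re_ofReal_mul] at h8
      have h9 := hB.re_dotProduct_pos hxne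
      simp only [RCLike.re_to_complex] at h9
      rcases mul_pos_iff.mp h8 with ⟨h, _⟩ | ⟨_, h⟩
      · exact h
      · linarith
    have hcC : ((c:ℝ):ℂ) ≠ 0 := by
      simpa using hc.ne'
    have hAinv : A⁻¹ = ((c⁻¹:ℝ):ℂ) • B⁻¹ := by
      apply Matrix.inv_eq_right_inv
      rw [hAc, smul_mul_assoc, mul_smul_comm, smul_smul, hBBi]
      have h10 : ((c:ℝ):ℂ) * ((c⁻¹:ℝ):ℂ) = 1 := by
        rw [← Complex.ofReal_mul, mul_inv_cancel₀ hc.ne', Complex.ofReal_one]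
      rw [h10, one_smul]
    have hCinv : C⁻¹ = (((c-1)⁻¹:ℝ):ℂ) • B⁻¹ := by
      apply Matrix.inv_eq_right_inv
      rw [hCval, smul_mul_assoc, mul_smul_comm, smul_smul, hBBi]
      have h10 : ((c-1:ℝ):ℂ) * (((c-1)⁻¹:ℝ):ℂ) = 1 := by
        rw [← Complex.ofReal_mul, mul_inv_cancel₀ hc1.ne', Complex.ofReal_one]
      rw [h10, one_smul]
    have hαv : α = c⁻¹ * β := by
      rw [hαd, hAinv, Matrix.trace_smul, smul_eq_mul, Complex.re_ofReal_mul, ← hβd]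
    have hγv : γ = (c-1)⁻¹ * β := by
      rw [hγd, hCinv, Matrix.trace_smul, smul_eq_mul, Complex.re_ofReal_mul, ← hβd]
    rw [hαv, hγv]
    have hcne : c ≠ 0 := hc.ne'
    have hc1ne : c - 1 ≠ 0 := hc1.ne'
    field_simp
end
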